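/- arXiv:1003.5452 — 2 statements merged into one kernel-verified Lean document; each statement's English description precedes it below -/
import Mathlib

section
/- Let d ≥ 2 and 1 < p < ∞. Define f : ℝ → ℝ by f(γ) = -γ|γ|^{p-2}(γ(p-1) + d - p), and set γ* := (p-d)/p and c_H := |(p-d)/p|^p. Then: (a) f(γ*) = c_H; (b) f is strictly increasing on (-∞, γ*] and strictly decreasing on [γ*, ∞); (c) f(γ) → -∞ as γ → +∞ and as γ → -∞; consequently (d) for every λ < c_H there exist unique real numbers γ_-(λ) < γ* < γ_+(λ) with f(γ_-(λ)) = f(γ_+(λ)) = λ, and f(γ) ≤ c_H for all γ ∈ ℝ with equality only at γ = γ*. -/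
/-!
Away from `γ = 0` the derivative of `f` is `(p - 1) |γ|^{p-2} (p - d - pγ)`, positive left of
`γ* = (p - d)/p` and negative right of it; the single point `γ = 0`, where `f` need not be
differentiable, does not spoil strict monotonicity because `f` is continuous. Since
`γ*(p - 1) + d - p = -γ*`, the maximum is `f(γ*) = γ*² |γ*|^{p-2} = |γ*|^p`. As `f → -∞` at both
ends, the intermediate value theorem on each monotone branch gives the two solutions of `f = λ`.
-/

open Filter Topology Set

section MonotoneOffPoint

variable {f : ℝ → ℝ} {c : ℝ}

lemma strictMonoOn_Icc_of_deriv_pos_of_ne {a b : ℝ} (hf : ContinuousOn f (Icc a b))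
    (hf' : ∀ x ∈ Ioo a b, x ≠ c → 0 < deriv f x) : StrictMonoOn f (Icc a b) := by
  by_cases hc : c ∈ Ioo a b
  · have hleft : StrictMonoOn f (Icc a c) :=
      strictMonoOn_of_deriv_pos (convex_Icc a c) (hf.mono (Icc_subset_Icc_right hc.2.le))
        fun x hx => by
          rw [interior_Icc] at hx
          exact hf' x ⟨hx.1, hx.2.trans hc.2⟩ hx.2.ne
    have hright : StrictMonoOn f (Icc c b) :=
      strictMonoOn_of_deriv_pos (convex_Icc c b) (hf.mono (Icc_subset_Icc_left hc.1.le))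
        fun x hx => by
          rw [interior_Icc] at hx
          exact hf' x ⟨hc.1.trans hx.1, hx.2⟩ hx.1.ne'
    rw [← Icc_union_Icc_eq_Icc hc.1.le hc.2.le]
    exact hleft.union hright (isGreatest_Icc hc.1.le) (isLeast_Icc hc.2.le)
  · refine strictMonoOn_of_deriv_pos (convex_Icc a b) hf fun x hx => ?_
    rw [interior_Icc] at hx
    exact hf' x hx (ne_of_mem_of_not_mem hx hc)

lemma strictMonoOn_of_deriv_pos_of_ne {D : Set ℝ} (hD : Convex ℝ D) (hf : ContinuousOn f D)
    (hf' : ∀ x ∈ interior D, x ≠ c → 0 < deriv f x) : StrictMonoOn f D := by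
  intro x hx y hy hxy
  have hsub : Icc x y ⊆ D := hD.ordConnected.out hx hy
  have hint : Ioo x y ⊆ interior D :=
    isOpen_Ioo.subset_interior_iff.2 (Ioo_subset_Icc_self.trans hsub)
  exact strictMonoOn_Icc_of_deriv_pos_of_ne (hf.mono hsub) (fun z hz => hf' z (hint hz))
    (left_mem_Icc.2 hxy.le) (right_mem_Icc.2 hxy.le) hxy

lemma strictAntiOn_of_deriv_neg_of_ne {D : Set ℝ} (hD : Convex ℝ D) (hf : ContinuousOn f D)
    (hf' : ∀ x ∈ interior D, x ≠ c → deriv f x < 0) : StrictAntiOn f D := by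
  have hneg : StrictMonoOn (-f) D :=
    strictMonoOn_of_deriv_pos_of_ne (c := c) hD hf.neg fun x hx hxc => by
      rw [deriv.neg]
      exact neg_pos.2 (hf' x hx hxc)
  exact fun x hx y hy hxy => neg_lt_neg_iff.1 (hneg hx hy hxy)

end MonotoneOffPoint

section UniqueLevel

variable {f : ℝ → ℝ} {c y : ℝ}

lemma existsUnique_lt_apply_eq_of_strictMonoOn_Iic (hf : ContinuousOn f (Iic c))
    (hmono : StrictMonoOn f (Iic c)) (hbot : Tendsto f atBot atBot) (hy : y < f c) :
    ∃! x, x < c ∧ f x = y := by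
  obtain ⟨b, hfb, hbc⟩ :=
    ((hbot.eventually (eventually_lt_atBot y)).and (eventually_le_atBot c)).exists
  obtain ⟨x, hx, rfl⟩ :=
    intermediate_value_Icc hbc (hf.mono Icc_subset_Iic_self) ⟨hfb.le, hy.le⟩
  have hxc : x < c := hx.2.lt_of_ne (by rintro rfl; exact hy.false)
  exact ⟨x, ⟨hxc, rfl⟩, fun z ⟨hzc, hz⟩ => hmono.injOn hzc.le hxc.le hz⟩

lemma existsUnique_gt_apply_eq_of_strictAntiOn_Ici (hf : ContinuousOn f (Ici c))
    (hanti : StrictAntiOn f (Ici c)) (htop : Tendsto f atTop atBot) (hy : y < f c) :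
    ∃! x, c < x ∧ f x = y := by
  obtain ⟨b, hfb, hcb⟩ :=
    ((htop.eventually (eventually_lt_atBot y)).and (eventually_ge_atTop c)).exists
  obtain ⟨x, hx, rfl⟩ :=
    intermediate_value_Icc' hcb (hf.mono Icc_subset_Ici_self) ⟨hfb.le, hy.le⟩
  have hcx : c < x := hx.1.lt_of_ne (by rintro rfl; exact hy.false)
  exact ⟨x, ⟨hcx, rfl⟩, fun z ⟨hcz, hz⟩ => hanti.injOn hcz.le hcx.le hz⟩

lemma apply_lt_of_strictMonoOn_Iic_of_strictAntiOn_Ici (hmono : StrictMonoOn f (Iic c))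
    (hanti : StrictAntiOn f (Ici c)) {x : ℝ} (hx : x ≠ c) : f x < f c :=
  hx.lt_or_gt.elim (fun h => hmono h.le self_mem_Iic h) (fun h => hanti self_mem_Ici h.le h)

end UniqueLevel

section SignedPower

variable {p : ℝ}

lemma abs_mul_abs_rpow_sub_two (hp : p ≠ 1) (x : ℝ) : |x| * |x| ^ (p - 2) = |x| ^ (p - 1) := by
  rw [← Real.rpow_one_add' (abs_nonneg x) (by contrapose! hp; linarith)]
  ring_nf

lemma mul_self_mul_abs_rpow_sub_two (hp : p ≠ 0) (x : ℝ) : x * x * |x| ^ (p - 2) = |x| ^ p := by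
  rcases eq_or_ne x 0 with rfl | hx
  · simp [Real.zero_rpow hp]
  · have hx' : 0 < |x| := abs_pos.2 hx
    conv_rhs => rw [show p = 1 + 1 + (p - 2) by ring]
    rw [Real.rpow_add hx', Real.rpow_add hx', Real.rpow_one, abs_mul_abs_self]

lemma continuous_mul_abs_rpow_sub_two (hp : 1 < p) :
    Continuous fun x : ℝ => x * |x| ^ (p - 2) := by
  refine continuous_iff_continuousAt.2 fun x => ?_
  rcases eq_or_ne x 0 with rfl | hx
  · have hbound : Tendsto (fun y : ℝ => |y| ^ (p - 1)) (𝓝 0) (𝓝 0) := by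
      simpa [Real.zero_rpow (sub_ne_zero.2 hp.ne')] using
        (continuous_abs.rpow_const fun _ => Or.inr (sub_pos.2 hp).le).tendsto 0
    simp only [ContinuousAt, zero_mul]
    refine squeeze_zero_norm (fun y => ?_) hbound
    rw [Real.norm_eq_abs, abs_mul, abs_of_nonneg (Real.rpow_nonneg (abs_nonneg y) _),
      abs_mul_abs_rpow_sub_two hp.ne']
  · exact continuousAt_id.mul ((Real.continuousAt_rpow_const _ _ (Or.inl (abs_ne_zero.2 hx))).comp
      continuous_abs.continuousAt)

lemma hasDerivAt_mul_abs_rpow_sub_two {x : ℝ} (hx : x ≠ 0) :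
    HasDerivAt (fun x : ℝ => x * |x| ^ (p - 2)) ((p - 1) * |x| ^ (p - 2)) x := by
  have habs : HasDerivAt (fun x : ℝ => |x| ^ (p - 2))
      ((p - 2) * |x| ^ (p - 2 - 1) * (SignType.sign x : ℝ)) x :=
    (Real.hasDerivAt_rpow_const (Or.inl (abs_ne_zero.2 hx))).comp x (hasDerivAt_abs hx)
  have hsign : x * (SignType.sign x : ℝ) = |x| := by
    rcases hx.lt_or_gt with h | h <;> simp [h, abs_of_neg, abs_of_pos]
  have hpow : |x| ^ (p - 2 - 1) * |x| = |x| ^ (p - 2) := by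
    rw [← Real.rpow_add_one (abs_ne_zero.2 hx)]
    ring_nf
  refine ((hasDerivAt_id' x).mul habs).congr_deriv ?_
  linear_combination (p - 2) * |x| ^ (p - 2 - 1) * hsign + (p - 2) * hpow

lemma tendsto_mul_abs_rpow_sub_two_atTop (hp : 1 < p) :
    Tendsto (fun x : ℝ => x * |x| ^ (p - 2)) atTop atTop := by
  refine (tendsto_rpow_atTop (sub_pos.2 hp)).congr' ?_
  filter_upwards [eventually_ge_atTop 0] with x hx
  rw [abs_of_nonneg hx, ← Real.rpow_one_add' hx (by linarith)]
  ring_nf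

lemma tendsto_mul_abs_rpow_sub_two_atBot (hp : 1 < p) :
    Tendsto (fun x : ℝ => x * |x| ^ (p - 2)) atBot atBot := by
  refine (tendsto_neg_atTop_atBot.comp
    ((tendsto_mul_abs_rpow_sub_two_atTop hp).comp tendsto_neg_atBot_atTop)).congr fun x => ?_
  simp only [Function.comp_apply, abs_neg, neg_mul, neg_neg]

end SignedPower

/-- The function `f` of the indicial equation `f(γ) = λ` for radial solutions `|x|^γ`. -/
noncomputable def hardyProfile (p d γ : ℝ) : ℝ := -(γ * |γ| ^ (p - 2) * (γ * (p - 1) + d - p))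

namespace hardyProfile

variable {p : ℝ} (d : ℝ)

lemma apply_critical (hp : p ≠ 0) : hardyProfile p d ((p - d) / p) = |(p - d) / p| ^ p := by
  have hlin : (p - d) / p * (p - 1) + d - p = -((p - d) / p) := by
    field_simp
    ring
  rw [hardyProfile, hlin, ← mul_self_mul_abs_rpow_sub_two hp]
  ring

lemma continuous (hp : 1 < p) : Continuous (hardyProfile p d) :=
  ((continuous_mul_abs_rpow_sub_two hp).mul (by fun_prop)).neg

lemma hasDerivAt {x : ℝ} (hx : x ≠ 0) :
    HasDerivAt (hardyProfile p d) ((p - 1) * |x| ^ (p - 2) * (p - d - p * x)) x := by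
  refine (((hasDerivAt_mul_abs_rpow_sub_two hx).mul
    (((hasDerivAt_id' x).mul_const (p - 1)).add_const d |>.sub_const p)).neg).congr_deriv ?_
  ring

lemma strictMonoOn (hp : 1 < p) : StrictMonoOn (hardyProfile p d) (Iic ((p - d) / p)) := by
  refine strictMonoOn_of_deriv_pos_of_ne (convex_Iic _) (continuous d hp).continuousOn
    (c := 0) fun x hx hx0 => ?_
  rw [interior_Iic, mem_Iio, lt_div_iff₀' (by linarith)] at hx
  rw [(hasDerivAt d hx0).deriv]
  have hpow := Real.rpow_pos_of_pos (abs_pos.2 hx0) (p - 2)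
  exact mul_pos (mul_pos (by linarith) hpow) (by linarith)

lemma strictAntiOn (hp : 1 < p) : StrictAntiOn (hardyProfile p d) (Ici ((p - d) / p)) := by
  refine strictAntiOn_of_deriv_neg_of_ne (convex_Ici _) (continuous d hp).continuousOn
    (c := 0) fun x hx hx0 => ?_
  rw [interior_Ici, mem_Ioi, div_lt_iff₀' (by linarith)] at hx
  rw [(hasDerivAt d hx0).deriv]
  have hpow := Real.rpow_pos_of_pos (abs_pos.2 hx0) (p - 2)
  exact mul_neg_of_pos_of_neg (mul_pos (by linarith) hpow) (by linarith)

lemma tendsto_atTop (hp : 1 < p) : Tendsto (hardyProfile p d) atTop atBot := by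
  have hlin : Tendsto (fun γ : ℝ => γ * (p - 1) + d - p) atTop atTop := by
    simpa only [add_sub_assoc, id_eq] using
      (tendsto_id.atTop_mul_const (sub_pos.2 hp)).atTop_add (tendsto_const_nhds (x := d - p))
  exact tendsto_neg_atTop_atBot.comp
    ((tendsto_mul_abs_rpow_sub_two_atTop hp).atTop_mul_atTop₀ hlin)

lemma tendsto_atBot (hp : 1 < p) : Tendsto (hardyProfile p d) atBot atBot := by
  have hlin : Tendsto (fun γ : ℝ => γ * (p - 1) + d - p) atBot atBot := by
    simpa only [add_sub_assoc, id_eq] using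
      (tendsto_id.atBot_mul_const (sub_pos.2 hp)).atBot_add (tendsto_const_nhds (x := d - p))
  exact tendsto_neg_atTop_atBot.comp
    ((tendsto_mul_abs_rpow_sub_two_atBot hp).atBot_mul_atBot₀ hlin)

end hardyProfile

theorem stmt1_general (d : ℕ) (p : ℝ) (hp : 1 < p)
    (f : ℝ → ℝ) (hf : f = fun γ => -(γ * |γ| ^ (p - 2) * (γ * (p - 1) + d - p)))
    (γstar cH : ℝ) (hγstar : γstar = (p - d) / p) (hcH : cH = |(p - d) / p| ^ p) :
    -- (a)
    f γstar = cH ∧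
    -- (b)
    StrictMonoOn f (Set.Iic γstar) ∧ StrictAntiOn f (Set.Ici γstar) ∧
    -- (c)
    Tendsto f atTop atBot ∧ Tendsto f atBot atBot ∧
    -- (d)
    (∀ lam : ℝ, lam < cH →
      (∃! γ : ℝ, γ < γstar ∧ f γ = lam) ∧ (∃! γ : ℝ, γstar < γ ∧ f γ = lam)) ∧
    (∀ γ : ℝ, f γ ≤ cH ∧ (f γ = cH → γ = γstar)) := by
  replace hf : f = hardyProfile p d := hf
  subst hf hγstar hcH
  have hcrit := hardyProfile.apply_critical (d : ℝ) (by linarith : p ≠ 0)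
  have hcont := hardyProfile.continuous d hp
  have hmono := hardyProfile.strictMonoOn d hp
  have hanti := hardyProfile.strictAntiOn d hp
  have htop := hardyProfile.tendsto_atTop d hp
  have hbot := hardyProfile.tendsto_atBot d hp
  refine ⟨hcrit, hmono, hanti, htop, hbot, fun lam hlam => ?_, fun γ => ?_⟩
  · rw [← hcrit] at hlam
    exact ⟨existsUnique_lt_apply_eq_of_strictMonoOn_Iic hcont.continuousOn hmono hbot hlam,
      existsUnique_gt_apply_eq_of_strictAntiOn_Ici hcont.continuousOn hanti htop hlam⟩
  · rw [← hcrit]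
    rcases eq_or_ne γ ((p - d) / p) with rfl | hγ
    · exact ⟨le_rfl, fun _ => rfl⟩
    · have hlt := apply_lt_of_strictMonoOn_Iic_of_strictAntiOn_Ici hmono hanti hγ
      exact ⟨hlt.le, fun h => absurd h hlt.ne⟩

theorem stmt1 (d : ℕ) (hd : 2 ≤ d) (p : ℝ) (hp : 1 < p)
    (f : ℝ → ℝ) (hf : f = fun γ => -(γ * |γ| ^ (p - 2) * (γ * (p - 1) + d - p)))
    (γstar cH : ℝ) (hγstar : γstar = (p - d) / p) (hcH : cH = |(p - d) / p| ^ p) :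
    -- (a)
    f γstar = cH ∧
    -- (b)
    StrictMonoOn f (Set.Iic γstar) ∧ StrictAntiOn f (Set.Ici γstar) ∧
    -- (c)
    Tendsto f atTop atBot ∧ Tendsto f atBot atBot ∧
    -- (d)
    (∀ lam : ℝ, lam < cH →
      (∃! γ : ℝ, γ < γstar ∧ f γ = lam) ∧ (∃! γ : ℝ, γstar < γ ∧ f γ = lam)) ∧
    (∀ γ : ℝ, f γ ≤ cH ∧ (f γ = cH → γ = γstar)) :=
  stmt1_general d p hp f hf γstar cH hγstar hcH
end

section
/- Let d ≥ 1, 1 < p < ∞, and let q be a real number with 1 ≤ q < d/p. Let X ⊆ ℝ^d be measurable and let V : ℝ^d → ℝ be measurable with ∫_{X ∩ {‖x‖ > 1}} |V|^q dx < ∞. Let 0 < a < b < ∞ and let φ : ℝ^d → ℝ be a bounded measurable function vanishing outside the annulus { x : a ≤ ‖x‖ ≤ b }. Then lim_{R → ∞} ∫_{X/R} R^p V(Rx) φ(x) dx = 0, where X/R := { x ∈ ℝ^d : Rx ∈ X }. -/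
/-!
Split `|V|` at height `t > 0`: for `q ≥ 1`, `|V| ≤ t ^ (1 - q) |V| ^ q + t`. On the support of `φ`
the point `R x` lies outside the unit ball once `R a > 1`, where `|V| ^ q` is integrable, and the
change of variables `y = R x` costs a factor `R ^ (-d)`. Choosing `t = R ^ (-d / q)` balances the
two terms and bounds the integral by a constant times `R ^ (p - d / q)`, which tends to `0`
because `q p < d`.
-/

open MeasureTheory Metric Filter Topology Set Module

noncomputable section

lemma le_rpow_one_sub_mul_rpow_add {q t v : ℝ} (hq : 1 ≤ q) (ht : 0 < t) (hv : 0 ≤ v) :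
    v ≤ t ^ (1 - q) * v ^ q + t := by
  rcases le_or_gt v t with hvt | htv
  · have : 0 ≤ t ^ (1 - q) * v ^ q := by positivity
    linarith
  · have hv0 : 0 < v := ht.trans htv
    calc v = v ^ (1 - q) * v ^ q := by rw [← Real.rpow_add hv0, sub_add_cancel, Real.rpow_one]
      _ ≤ t ^ (1 - q) * v ^ q := by
        have := Real.rpow_le_rpow_of_nonpos ht htv.le (sub_nonpos.mpr hq)
        gcongr
      _ ≤ t ^ (1 - q) * v ^ q + t := le_add_of_nonneg_right ht.le

section ScaledPotential

variable {E : Type*} [NormedAddCommGroup E] [NormedSpace ℝ E]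
  {X : Set E} {V φ : E → ℝ} {p q a b M R : ℝ}

lemma norm_scaled_mul_le_indicator (hq : 1 ≤ q) {t : ℝ} (ht : 0 < t) (hR : 0 < R)
    (hRa : 1 < R * a) (hφbdd : ∀ x, |φ x| ≤ M)
    (hφsupp : ∀ x, ¬(a ≤ ‖x‖ ∧ ‖x‖ ≤ b) → φ x = 0) {x : E} (hx : R • x ∈ X) :
    ‖R ^ p * V (R • x) * φ x‖ ≤ M * R ^ p * (closedBall 0 b).indicator
      (fun x => t ^ (1 - q) * (X ∩ {y | 1 < ‖y‖}).indicator (fun y => |V y| ^ q) (R • x) + t) x := by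
  have hM : 0 ≤ M := (abs_nonneg _).trans (hφbdd 0)
  by_cases hxsupp : a ≤ ‖x‖ ∧ ‖x‖ ≤ b
  swap
  · rw [hφsupp x hxsupp, mul_zero, norm_zero]
    refine mul_nonneg (by positivity) (indicator_nonneg (fun _ _ => ?_) _)
    exact add_nonneg (mul_nonneg (by positivity) (indicator_nonneg (by intros; positivity) _)) ht.le
  have hRx : 1 < ‖R • x‖ := by
    rw [norm_smul, Real.norm_of_nonneg hR.le]
    exact hRa.trans_le (by gcongr; exact hxsupp.1)
  rw [indicator_of_mem (mem_closedBall_zero_iff.mpr hxsupp.2),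
    indicator_of_mem (show R • x ∈ X ∩ {y | 1 < ‖y‖} from ⟨hx, hRx⟩), Real.norm_eq_abs,
    abs_mul, abs_mul, abs_of_pos (Real.rpow_pos_of_pos hR p)]
  calc R ^ p * |V (R • x)| * |φ x| ≤ R ^ p * (t ^ (1 - q) * |V (R • x)| ^ q + t) * M := by
        gcongr
        · exact le_rpow_one_sub_mul_rpow_add hq ht (abs_nonneg _)
        · exact hφbdd x
    _ = M * R ^ p * (t ^ (1 - q) * |V (R • x)| ^ q + t) := by ring

variable [FiniteDimensional ℝ E] [MeasurableSpace E] [BorelSpace E] (μ : Measure E)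
  [μ.IsAddHaarMeasure]

lemma setIntegral_mul_comp_smul_add_le {W : E → ℝ} (hW : Integrable W μ) (hW0 : 0 ≤ W)
    {K : Set E} (hK : μ K ≠ ⊤) {C R : ℝ} (t : ℝ) (hC : 0 ≤ C) (hR : 0 < R) :
    ∫ x in K, (C * W (R • x) + t) ∂μ ≤ C * (R ^ finrank ℝ E)⁻¹ * ∫ x, W x ∂μ + t * μ.real K := by
  have hWR : Integrable (fun x => W (R • x)) μ := hW.comp_smul hR.ne'
  have hscale : ∫ x in K, W (R • x) ∂μ ≤ (R ^ finrank ℝ E)⁻¹ * ∫ x, W x ∂μ := by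
    calc ∫ x in K, W (R • x) ∂μ ≤ ∫ x, W (R • x) ∂μ :=
          setIntegral_le_integral hWR (ae_of_all _ fun x => hW0 (R • x))
      _ = (R ^ finrank ℝ E)⁻¹ * ∫ x, W x ∂μ :=
          Measure.integral_comp_smul_of_nonneg μ W R (hR := hR.le)
  rw [integral_add (hWR.const_mul C).integrableOn (integrableOn_const hK), integral_const_mul,
    setIntegral_const, smul_eq_mul, mul_assoc, mul_comm t]
  gcongr

theorem norm_setIntegral_scaled_le (hq : 1 ≤ q) (hX : MeasurableSet X)
    (hVLq : IntegrableOn (fun y => |V y| ^ q) (X ∩ {y | 1 < ‖y‖}) μ)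
    (hφbdd : ∀ x, |φ x| ≤ M) (hφsupp : ∀ x, ¬(a ≤ ‖x‖ ∧ ‖x‖ ≤ b) → φ x = 0)
    (hR : 0 < R) (hRa : 1 < R * a) :
    ‖∫ x in {x | R • x ∈ X}, R ^ p * V (R • x) * φ x ∂μ‖ ≤
      M * (∫ y in X ∩ {y | 1 < ‖y‖}, |V y| ^ q ∂μ + μ.real (closedBall 0 b)) *
        R ^ (p - finrank ℝ E / q) := by
  set A := X ∩ {y : E | 1 < ‖y‖}
  set W := A.indicator fun y => |V y| ^ q
  set K := closedBall (0 : E) b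
  set t := R ^ (-(finrank ℝ E / q))
  have hA : MeasurableSet A := hX.inter (measurableSet_lt measurable_const measurable_norm)
  have hW : Integrable W μ := (integrable_indicator_iff hA).mpr hVLq
  have hW0 : 0 ≤ W := fun y => indicator_nonneg (fun _ _ => by positivity) y
  have hK : μ K ≠ ⊤ := measure_closedBall_lt_top.ne
  have hM : 0 ≤ M := (abs_nonneg _).trans (hφbdd 0)
  have ht : 0 < t := Real.rpow_pos_of_pos hR _
  have hq0 : q ≠ 0 := by positivity
  have hbalance : t ^ (1 - q) * (R ^ finrank ℝ E)⁻¹ = t := by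
    rw [← Real.rpow_mul hR.le, ← Real.rpow_natCast, ← Real.rpow_neg hR.le, ← Real.rpow_add hR]
    congr 1
    field_simp
    ring
  have hS : MeasurableSet {x : E | R • x ∈ X} := hX.preimage (measurable_const_smul R)
  set g := fun x => M * R ^ p * K.indicator (fun x => t ^ (1 - q) * W (R • x) + t) x
  have hdom : Integrable g μ :=
    ((((hW.comp_smul hR.ne').const_mul _).integrableOn.add
      (integrableOn_const hK)).integrable_indicator measurableSet_closedBall).const_mul _
  calc ‖∫ x in {x | R • x ∈ X}, R ^ p * V (R • x) * φ x ∂μ‖ ≤ ∫ x in {x | R • x ∈ X}, g x ∂μ :=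
        norm_integral_le_of_norm_le hdom.integrableOn <| ae_restrict_of_forall_mem hS fun x hx =>
          norm_scaled_mul_le_indicator hq ht hR hRa hφbdd hφsupp hx
    _ ≤ ∫ x, g x ∂μ :=
        setIntegral_le_integral hdom <| ae_of_all _ fun x =>
          mul_nonneg (by positivity) (indicator_nonneg
            (fun _ _ => add_nonneg (mul_nonneg (by positivity) (hW0 _)) ht.le) _)
    _ = M * R ^ p * ∫ x in K, (t ^ (1 - q) * W (R • x) + t) ∂μ := by
        rw [integral_const_mul, integral_indicator measurableSet_closedBall]
    _ ≤ M * R ^ p * (t ^ (1 - q) * (R ^ finrank ℝ E)⁻¹ * ∫ y, W y ∂μ + t * μ.real K) := by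
        gcongr
        exact setIntegral_mul_comp_smul_add_le μ hW hW0 hK t (by positivity) hR
    _ = M * (∫ y in A, |V y| ^ q ∂μ + μ.real K) * (R ^ p * t) := by
        rw [hbalance, integral_indicator hA]
        ring
    _ = _ := by rw [← Real.rpow_add hR, ← sub_eq_add_neg]

end ScaledPotential

theorem stmt7_general (d : ℕ) (p : ℝ) (hp : 1 < p)
    (q : ℝ) (hq1 : 1 ≤ q) (hq2 : q < (d : ℝ) / p)
    (X : Set (EuclideanSpace ℝ (Fin d))) (hX : MeasurableSet X)
    (V : EuclideanSpace ℝ (Fin d) → ℝ)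
    (hVLq : IntegrableOn (fun x => |V x| ^ q) (X ∩ {x : EuclideanSpace ℝ (Fin d) | 1 < ‖x‖}))
    (a b : ℝ) (ha : 0 < a)
    (φ : EuclideanSpace ℝ (Fin d) → ℝ)
    (M : ℝ) (hφbdd : ∀ x, |φ x| ≤ M)
    (hφsupp : ∀ x : EuclideanSpace ℝ (Fin d), ¬(a ≤ ‖x‖ ∧ ‖x‖ ≤ b) → φ x = 0) :
    Tendsto
      (fun R : ℝ => ∫ x in {x : EuclideanSpace ℝ (Fin d) | R • x ∈ X}, R ^ p * V (R • x) * φ x)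
      atTop (𝓝 0) := by
  have hpdq : p < d / q := by
    rw [lt_div_iff₀ (by positivity)]
    rw [lt_div_iff₀ (by positivity)] at hq2
    linarith
  have hdecay : Tendsto (fun R : ℝ => R ^ (p - d / q)) atTop (𝓝 0) := by
    simpa only [neg_sub] using tendsto_rpow_neg_atTop (sub_pos.mpr hpdq)
  refine squeeze_zero_norm' ?_ (by simpa using hdecay.const_mul (M * ((∫ y in X ∩ {y | 1 < ‖y‖},
    |V y| ^ q) + volume.real (closedBall (0 : EuclideanSpace ℝ (Fin d)) b))))
  filter_upwards [eventually_gt_atTop 0, eventually_gt_atTop a⁻¹] with R hR hRa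
  simpa only [finrank_euclideanSpace_fin] using
    norm_setIntegral_scaled_le volume (p := p) hq1 hX hVLq hφbdd hφsupp hR
      ((inv_lt_iff_one_lt_mul₀ ha).mp hRa)

theorem stmt7 (d : ℕ) (hd : 1 ≤ d) (p : ℝ) (hp : 1 < p)
    (q : ℝ) (hq1 : 1 ≤ q) (hq2 : q < (d : ℝ) / p)
    (X : Set (EuclideanSpace ℝ (Fin d))) (hX : MeasurableSet X)
    (V : EuclideanSpace ℝ (Fin d) → ℝ) (hV : Measurable V)
    (hVLq : IntegrableOn (fun x => |V x| ^ q) (X ∩ {x : EuclideanSpace ℝ (Fin d) | 1 < ‖x‖}))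
    (a b : ℝ) (ha : 0 < a) (hab : a < b)
    (φ : EuclideanSpace ℝ (Fin d) → ℝ) (hφmeas : Measurable φ)
    (M : ℝ) (hφbdd : ∀ x, |φ x| ≤ M)
    (hφsupp : ∀ x : EuclideanSpace ℝ (Fin d), ¬(a ≤ ‖x‖ ∧ ‖x‖ ≤ b) → φ x = 0) :
    Tendsto
      (fun R : ℝ => ∫ x in {x : EuclideanSpace ℝ (Fin d) | R • x ∈ X}, R ^ p * V (R • x) * φ x)
      atTop (𝓝 0) :=
  stmt7_general d p hp q hq1 hq2 X hX V hVLq a b ha φ M hφbdd hφsupp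
end
end
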